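/- Let W ⊆ {0,1}^ω be the set of sequences (σ_k)_{k≥1} with σ₁ = 0 such that there exist j ≥ 1 and k ≥ 1 with σ_j = 1 and σ_{k+1} = σ_{k+2} = ⋯ = σ_{k+j} = 1. In the Banach–Mazur game (G_{0,1}, 0, W), Player 0 has a move-counting winning strategy (namely h(v,n) = 1ⁿ), but for every b ≥ 1 Player 0 has no b-bounded winning strategy. -/

import Mathlib

open MeasureTheory
open scoped ENNReal NNReal

namespace BMGame

variable {V : Type*}

/-- The prefix of length `n` of the infinite sequence `ρ`. -/
def pref (ρ : ℕ → V) (n : ℕ) : List V := (List.range n).map ρ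

/-- `ρ` is an infinite path of the graph `E` starting at `v₀`. -/
def IsPlay (E : V → V → Prop) (v₀ : V) (ρ : ℕ → V) : Prop :=
  ρ 0 = v₀ ∧ ∀ n, E (ρ n) (ρ (n + 1))

/-- `π` is a nonempty finite path of the graph `E` starting at `v₀` (a position of the game). -/
def IsPos (E : V → V → Prop) (v₀ : V) (π : List V) : Prop :=
  π.head? = some v₀ ∧ π.Chain' E

/-- A strategy for player 0 assigns to each position the (nonempty) block of vertices
appended by player 0's move; `(π ++ f π).Chain' E` says that this block is a path
starting at the last vertex of `π`. -/
def IsStrategy (E : V → V → Prop) (v₀ : V) (f : List V → List V) : Prop :=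
  ∀ π, IsPos E v₀ π → f π ≠ [] ∧ (π ++ f π).Chain' E

/-- The play `ρ` is consistent with the strategy `f`: there are cut points
`c 0, c 1, …` (the lengths of the prefixes built after each move of player 1) such that
after each such prefix player 0 plays according to `f`, and player 1 then appends a
nonempty block. -/
def ConsGen (f : List V → List V) (ρ : ℕ → V) : Prop :=
  ∃ c : ℕ → ℕ, 1 ≤ c 0 ∧ ∀ i,
    pref ρ (c i + (f (pref ρ (c i))).length) = pref ρ (c i) ++ f (pref ρ (c i)) ∧
    c i + (f (pref ρ (c i))).length < c (i + 1)

/-- `f` is a winning strategy for player 0 in the Banach–Mazur game `(E, v₀, W)`. -/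
def WinningStrategy (E : V → V → Prop) (v₀ : V) (W : Set (ℕ → V))
    (f : List V → List V) : Prop :=
  IsStrategy E v₀ f ∧ ∀ ρ, IsPlay E v₀ ρ → ConsGen f ρ → ρ ∈ W

/-- The strategy `f` is `b`-bounded: each of its moves has length at most `b`. -/
def BoundedBy (E : V → V → Prop) (v₀ : V) (b : ℕ) (f : List V → List V) : Prop :=
  ∀ π, IsPos E v₀ π → (f π).length ≤ b

/-- A positional strategy assigns to each vertex the nonempty block appended. -/
def IsPositional (E : V → V → Prop) (f : V → List V) : Prop :=
  ∀ v, f v ≠ [] ∧ (v :: f v).Chain' E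

/-- Consistency with a positional strategy: after each prefix chosen by player 1,
player 0 plays `f` of the current (last) vertex. -/
def ConsPositional (f : V → List V) (ρ : ℕ → V) : Prop :=
  ∃ c : ℕ → ℕ, 1 ≤ c 0 ∧ ∀ i,
    pref ρ (c i + (f (ρ (c i - 1))).length) = pref ρ (c i) ++ f (ρ (c i - 1)) ∧
    c i + (f (ρ (c i - 1))).length < c (i + 1)

def PositionalWinning (E : V → V → Prop) (v₀ : V) (W : Set (ℕ → V)) (f : V → List V) : Prop :=
  IsPositional E f ∧ ∀ ρ, IsPlay E v₀ ρ → ConsPositional f ρ → ρ ∈ W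

/-- Structural requirement shared by move-counting and length-counting strategies:
for `n ≥ 1`, `h v n` is a nonempty block forming a path from `v`. -/
def IsCountingStrategy (E : V → V → Prop) (h : V → ℕ → List V) : Prop :=
  ∀ v n, 1 ≤ n → h v n ≠ [] ∧ (v :: h v n).Chain' E

/-- Consistency with a move-counting strategy: at its `i`-th move (`i ≥ 1`) player 0 plays
`h (current vertex) i`. -/
def ConsMoveCounting (h : V → ℕ → List V) (ρ : ℕ → V) : Prop :=
  ∃ c : ℕ → ℕ, 1 ≤ c 0 ∧ ∀ i,
    pref ρ (c i + (h (ρ (c i - 1)) (i + 1)).length) = pref ρ (c i) ++ h (ρ (c i - 1)) (i + 1) ∧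
    c i + (h (ρ (c i - 1)) (i + 1)).length < c (i + 1)

def MoveCountingWinning (E : V → V → Prop) (v₀ : V) (W : Set (ℕ → V))
    (h : V → ℕ → List V) : Prop :=
  IsCountingStrategy E h ∧ ∀ ρ, IsPlay E v₀ ρ → ConsMoveCounting h ρ → ρ ∈ W

/-- Consistency with a length-counting strategy: after a prefix of length `c i`
player 0 plays `h (current vertex) (c i)`. -/
def ConsLengthCounting (h : V → ℕ → List V) (ρ : ℕ → V) : Prop :=
  ∃ c : ℕ → ℕ, 1 ≤ c 0 ∧ ∀ i,
    pref ρ (c i + (h (ρ (c i - 1)) (c i)).length) = pref ρ (c i) ++ h (ρ (c i - 1)) (c i) ∧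
    c i + (h (ρ (c i - 1)) (c i)).length < c (i + 1)

def LengthCountingWinning (E : V → V → Prop) (v₀ : V) (W : Set (ℕ → V))
    (h : V → ℕ → List V) : Prop :=
  IsCountingStrategy E h ∧ ∀ ρ, IsPlay E v₀ ρ → ConsLengthCounting h ρ → ρ ∈ W

/-- The segment `ρ a, ρ (a+1), …, ρ (b-1)` of an infinite sequence. -/
def seg (ρ : ℕ → V) (a b : ℕ) : List V := (List.range (b - a)).map fun j => ρ (a + j)

/-- A last-move strategy is defined on all nonempty finite paths of the graph. -/
def IsLastMove (E : V → V → Prop) (g : List V → List V) : Prop :=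
  ∀ π, π ≠ [] → π.Chain' E → g π ≠ [] ∧ (π ++ g π).Chain' E

/-- Consistency with the last-move strategy `g`: the play decomposes as
`π₁ g(π₁) π₂ g(π₂) ⋯` where the `πᵢ` are the (nonempty) moves of player 1. -/
def ConsLastMove (g : List V → List V) (ρ : ℕ → V) : Prop :=
  ∃ s e : ℕ → ℕ, s 0 = 0 ∧ (∀ i, s i < e i) ∧ ∀ i,
    seg ρ (e i) (e i + (g (seg ρ (s i) (e i))).length) = g (seg ρ (s i) (e i)) ∧
    s (i + 1) = e i + (g (seg ρ (s i) (e i))).length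

def LastMoveWinning (E : V → V → Prop) (v₀ : V) (W : Set (ℕ → V)) (g : List V → List V) : Prop :=
  IsLastMove E g ∧ ∀ ρ, IsPlay E v₀ ρ → ConsLastMove g ρ → ρ ∈ W

/-- The cylinder generated by the finite word `π`. -/
def Cyl (π : List V) : Set (ℕ → V) := {ρ | pref ρ π.length = π}

/-- One-step transition probabilities obtained from the weights `w`. -/
noncomputable def transP [Fintype V] (E : V → V → Prop) (w : V → V → ℝ≥0) (u v : V) : ℝ≥0∞ := by
  classical
  exact if E u v then
    (w u v : ℝ≥0∞) / ∑ x ∈ Finset.univ.filter (fun x => E u x), (w u x : ℝ≥0∞)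
  else 0

/-- The probability of the cylinder generated by a finite word: the product of the
one-step transition probabilities along it. -/
noncomputable def pathP [Fintype V] (E : V → V → Prop) (w : V → V → ℝ≥0) (π : List V) : ℝ≥0∞ :=
  ((π.zip π.tail).map fun q => transP E w q.1 q.2).prod

/-- `P` is the reasonable probability measure associated with the weights `w`. -/
def IsReasonable [Fintype V] [MeasurableSpace (ℕ → V)] (E : V → V → Prop) (v₀ : V)
    (w : V → V → ℝ≥0) (P : Measure (ℕ → V)) : Prop :=
  IsProbabilityMeasure P ∧ ∀ π : List V, π.head? = some v₀ → P (Cyl π) = pathP E w π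

/-- `Ps` is a legal move of player 0 in the generalised game `G_α` at position `π`: a
finite nonempty set of nonempty finite paths from the last vertex of `π` whose union of
cylinders has conditional probability at least `α` given `Cyl π`. -/
def LegalProposal [MeasurableSpace (ℕ → V)] (E : V → V → Prop) (P : Measure (ℕ → V)) (α : ℝ)
    (π : List V) (Ps : Finset (List V)) : Prop :=
  Ps.Nonempty ∧ (∀ τ ∈ Ps, τ ≠ [] ∧ (π ++ τ).Chain' E) ∧
    ENNReal.ofReal α ≤ P (⋃ τ ∈ Ps, Cyl (π ++ τ)) / P (Cyl π)

/-- An α-strategy for player 0. -/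
def IsAlphaStrategy [MeasurableSpace (ℕ → V)] (E : V → V → Prop) (v₀ : V) (P : Measure (ℕ → V))
    (α : ℝ) (f : List V → Finset (List V)) : Prop :=
  ∀ π, IsPos E v₀ π → LegalProposal E P α π (f π)

/-- Consistency with an α-strategy: at each stage, player 1 picks some element of the
set proposed by player 0 and appends a nonempty block after it. -/
def ConsAlpha (f : List V → Finset (List V)) (ρ : ℕ → V) : Prop :=
  ∃ c : ℕ → ℕ, 1 ≤ c 0 ∧ ∀ i, ∃ τ ∈ f (pref ρ (c i)),
    pref ρ (c i + τ.length) = pref ρ (c i) ++ τ ∧ c i + τ.length < c (i + 1)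

def AlphaWinning [MeasurableSpace (ℕ → V)] (E : V → V → Prop) (v₀ : V) (P : Measure (ℕ → V))
    (α : ℝ) (W : Set (ℕ → V)) (f : List V → Finset (List V)) : Prop :=
  IsAlphaStrategy E v₀ P α f ∧ ∀ ρ, IsPlay E v₀ ρ → ConsAlpha f ρ → ρ ∈ W

/-- A strategy for player 1 in the generalised game `G_α` consists of an initial path and,
for each position together with a legal proposal of player 0, the selected element of the
proposal and the next (nonempty) block played by player 1. -/
def IsP1Strategy [MeasurableSpace (ℕ → V)] (E : V → V → Prop) (v₀ : V) (P : Measure (ℕ → V))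
    (α : ℝ) (init : List V) (g : List V → Finset (List V) → List V × List V) : Prop :=
  IsPos E v₀ init ∧
    ∀ π Ps, IsPos E v₀ π → LegalProposal E P α π Ps →
      (g π Ps).1 ∈ Ps ∧ (g π Ps).2 ≠ [] ∧ (π ++ ((g π Ps).1 ++ (g π Ps).2)).Chain' E

/-- Consistency of a play with player 1's strategy `(init, g)`:
there is a sequence of legal proposals of player 0 generating the play. -/
def ConsP1 [MeasurableSpace (ℕ → V)] (E : V → V → Prop) (P : Measure (ℕ → V)) (α : ℝ)
    (init : List V) (g : List V → Finset (List V) → List V × List V) (ρ : ℕ → V) : Prop :=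
  ∃ (Ps : ℕ → Finset (List V)) (p : ℕ → List V), p 0 = init ∧
    (∀ n, pref ρ (p n).length = p n) ∧
    ∀ n, LegalProposal E P α (p n) (Ps n) ∧
      p (n + 1) = p n ++ ((g (p n) (Ps n)).1 ++ (g (p n) (Ps n)).2)

def P1Winning [MeasurableSpace (ℕ → V)] (E : V → V → Prop) (v₀ : V) (P : Measure (ℕ → V))
    (α : ℝ) (W : Set (ℕ → V)) (init : List V)
    (g : List V → Finset (List V) → List V × List V) : Prop :=
  IsP1Strategy E v₀ P α init g ∧ ∀ ρ, IsPlay E v₀ ρ → ConsP1 E P α init g ρ → ρ ∉ W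

/-- A union of cylinders, i.e. an open subset of the space of sequences. -/
def IsCylOpen (U : Set (ℕ → V)) : Prop :=
  ∃ S : Set (List V), U = ⋃ π ∈ S, Cyl π

/-- `W` is a countable intersection of open subsets of the space `Paths (G, v₀)`. -/
def IsCountableInterOfOpens (E : V → V → Prop) (v₀ : V) (W : Set (ℕ → V)) : Prop :=
  ∃ U : ℕ → Set (ℕ → V), (∀ n, IsCylOpen (U n)) ∧
    W = {ρ | IsPlay E v₀ ρ} ∩ ⋂ n, U n

/-- For every `n`, the concatenation of the blocks `u 0, …, u (n-1)` is a prefix of `ρ`. -/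
def AgreesWithBlocks (ρ : ℕ → V) (u : ℕ → List V) : Prop :=
  ∀ n, pref ρ (((List.range n).map u).flatten).length = ((List.range n).map u).flatten

end BMGame

open BMGame

/-- The complete directed graph on `{0,1}` (all edges, including self-loops). -/
def E2 : Fin 2 → Fin 2 → Prop := fun _ _ => True

/-- The winning condition of Example `nobound`: sequences starting with `0` containing a
block of consecutive `1`'s strictly longer than the initial block of `0`'s, i.e.
`σ₁ = 0` and there are `j ≥ 1`, `k ≥ 1` with `σ_j = 1` and `σ_{k+1} = ⋯ = σ_{k+j} = 1`
(sequences are `0`-indexed here, `σ_i = ρ (i - 1)`). -/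
def W1 : Set (ℕ → Fin 2) :=
  {ρ | ρ 0 = 0 ∧ ∃ j k : ℕ, 1 ≤ j ∧ 1 ≤ k ∧ ρ (j - 1) = 1 ∧
    ∀ i, 1 ≤ i → i ≤ j → ρ (k + i - 1) = 1}

/-!
Playing `1ⁿ` at the `n`-th move creates runs of `1`s of every length,
so some run is longer than the position of the first `1`. Against a `b`-bounded strategy,
player 1 opens with `0^(b+1)` and answers every move with a single `0`: then `σ_j = 1`
forces `j > b + 1`, while every run of `1`s has length at most `b`.
-/

lemma exists_mem_Icc_of_gaps_le {z : ℕ → ℕ} {g : ℕ} (hz : ∀ i, i ≤ z i)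
    (hgap : ∀ i, z (i + 1) ≤ z i + g + 1) {m : ℕ} (h0 : z 0 ≤ m + g) :
    ∃ i, z i ∈ Set.Icc m (m + g) := by
  classical
  have hex : ∃ i, m ≤ z i := ⟨m, hz m⟩
  cases hi : Nat.find hex with
  | zero => exact ⟨0, hi ▸ Nat.find_spec hex, h0⟩
  | succ k =>
    have hk := Nat.find_min hex (show k < Nat.find hex by omega)
    refine ⟨k + 1, hi ▸ Nat.find_spec hex, ?_⟩
    have := hgap k
    omega

namespace BMGame

variable {V : Type*}

section Prefixes

@[simp] lemma length_pref (ρ : ℕ → V) (n : ℕ) : (pref ρ n).length = n := by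
  simp [pref]

@[simp] lemma getElem_pref (ρ : ℕ → V) (n m : ℕ) (h : m < (pref ρ n).length) :
    (pref ρ n)[m] = ρ m := by
  simp [pref]

lemma pref_add (ρ : ℕ → V) (a n : ℕ) : pref ρ (a + n) = pref ρ a ++ seg ρ a (a + n) := by
  rw [pref, pref, seg, Nat.add_sub_cancel_left, List.range_add, List.map_append, List.map_map]
  rfl

lemma getElem_eq_of_pref_eq {ρ : ℕ → V} {l : List V} (hl : pref ρ l.length = l) {m : ℕ}
    (hm : m < l.length) : l[m] = ρ m :=
  (List.getElem_of_eq hl.symm hm).trans (getElem_pref _ _ _ _)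

lemma apply_length_sub_one_eq_of_pref_eq {ρ : ℕ → V} {l : List V} (hl : pref ρ l.length = l)
    {a : V} (ha : l.getLast? = some a) : ρ (l.length - 1) = a := by
  rw [List.getLast?_eq_getElem?] at ha
  obtain ⟨hlt, heq⟩ := List.getElem?_eq_some_iff.mp ha
  exact (getElem_eq_of_pref_eq hl hlt).symm.trans heq

lemma apply_add_eq_getElem {ρ : ℕ → V} {a : ℕ} {l : List V}
    (h : pref ρ (a + l.length) = pref ρ a ++ l) {t : ℕ} (ht : t < l.length) :
    ρ (a + t) = l[t] := by
  rw [pref_add, List.append_cancel_left_eq] at h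
  rw [← List.getElem_of_eq h (by simpa [seg] using ht)]
  simp [seg]

lemma pref_length_eq_of_isPrefix {ρ : ℕ → V} {l l' : List V} (hl : pref ρ l.length = l)
    (h : l' <+: l) : pref ρ l'.length = l' :=
  List.ext_getElem (length_pref _ _) fun m _ hm => by
    rw [getElem_pref, h.getElem hm, getElem_eq_of_pref_eq hl]

lemma exists_pref_eq_of_isPrefix [Inhabited V] {p : ℕ → List V} (hp : ∀ n, p n <+: p (n + 1))
    (hlen : ∀ n, n < (p n).length) : ∃ ρ : ℕ → V, ∀ n, pref ρ (p n).length = p n := by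
  have hmono : ∀ m n, m ≤ n → p m <+: p n := fun m n hmn =>
    Nat.le_induction (List.prefix_refl _) (fun n _ ih => ih.trans (hp n)) n hmn
  refine ⟨fun m => (p (m + 1)).getD m default, fun n =>
    List.ext_getElem (length_pref _ _) fun m _ hm => ?_⟩
  have hm' : m < (p (m + 1)).length := (hlen (m + 1)).trans' (Nat.lt_succ_self m)
  rw [getElem_pref, List.getD_eq_getElem _ _ hm']
  rcases le_total n (m + 1) with hle | hle
  · exact ((hmono _ _ hle).getElem hm).symm
  · exact (hmono _ _ hle).getElem hm'

end Prefixes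

section FixedReply

variable (f : List V → List V) (init u : List V)

/-- The position after player 1 has opened with `init` and answered each of the first `n`
moves of `f` with `u`. -/
def fixedReplyPos : ℕ → List V
  | 0 => init
  | n + 1 => fixedReplyPos n ++ f (fixedReplyPos n) ++ u

lemma length_fixedReplyPos_succ (n : ℕ) :
    (fixedReplyPos f init u (n + 1)).length =
      (fixedReplyPos f init u n).length + (f (fixedReplyPos f init u n)).length + u.length := by
  simp [fixedReplyPos, Nat.add_assoc]

variable {init u}

lemma lt_length_fixedReplyPos (hinit : init ≠ []) (hu : u ≠ []) (n : ℕ) :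
    n < (fixedReplyPos f init u n).length := by
  induction n with
  | zero => exact List.length_pos_iff.mpr hinit
  | succ n ih =>
    have := List.length_pos_iff.mpr hu
    rw [length_fixedReplyPos_succ]
    omega

lemma head?_fixedReplyPos {a : V} (hinit : init.head? = some a) (n : ℕ) :
    (fixedReplyPos f init u n).head? = some a := by
  induction n with
  | zero => exact hinit
  | succ n ih => simp [fixedReplyPos, ih]

lemma getLast?_fixedReplyPos {a : V} (hinit : init.getLast? = some a) (hu : u.getLast? = some a)
    (n : ℕ) : (fixedReplyPos f init u n).getLast? = some a := by
  cases n <;> simp [fixedReplyPos, hinit, hu]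

lemma exists_consGen_fixedReplyPos [Inhabited V] (hinit : init ≠ []) (hu : u ≠ []) :
    ∃ ρ : ℕ → V, ConsGen f ρ ∧ ∀ n, pref ρ (fixedReplyPos f init u n).length =
      fixedReplyPos f init u n := by
  set p := fixedReplyPos f init u
  have hprefix : ∀ n, p n ++ f (p n) <+: p (n + 1) := fun n => List.prefix_append _ _
  obtain ⟨ρ, hρ⟩ := exists_pref_eq_of_isPrefix (p := p)
    (fun n => (List.prefix_append _ _).trans (hprefix n)) (lt_length_fixedReplyPos f hinit hu)
  refine ⟨ρ, ⟨fun i => (p i).length, ?_, fun i => ?_⟩, hρ⟩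
  · exact List.length_pos_iff.mpr hinit
  · simp only [hρ i]
    refine ⟨by simpa using pref_length_eq_of_isPrefix (hρ (i + 1)) (hprefix i), ?_⟩
    have := List.length_pos_iff.mpr hu
    simp only [p, length_fixedReplyPos_succ]
    omega

end FixedReply

lemma ConsMoveCounting.exists_block {h : V → ℕ → List V} {ρ : ℕ → V}
    (hρ : ConsMoveCounting h ρ) (i : ℕ) : ∃ c, 1 ≤ c ∧
      ∀ t (ht : t < (h (ρ (c - 1)) (i + 1)).length), ρ (c + t) = (h (ρ (c - 1)) (i + 1))[t] := by
  obtain ⟨c, hc0, hc⟩ := hρ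
  have hmono : StrictMono c := strictMono_nat_of_lt_succ fun i => by have := (hc i).2; omega
  exact ⟨c i, hc0.trans (hmono.monotone i.zero_le), fun t ht => apply_add_eq_getElem (hc i).1 ht⟩

end BMGame

open BMGame

lemma isChain_E2 (l : List (Fin 2)) : l.IsChain E2 :=
  List.isChain_iff_getElem.mpr fun _ _ => trivial

lemma mem_W1_of_forall_exists_run {ρ : ℕ → Fin 2} (h0 : ρ 0 = 0)
    (hruns : ∀ n, ∃ k, 1 ≤ k ∧ ∀ t ≤ n, ρ (k + t) = 1) : ρ ∈ W1 := by
  obtain ⟨m, -, hm⟩ := hruns 0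
  obtain ⟨k, hk, hrun⟩ := hruns m
  refine ⟨h0, m + 1, k, by omega, hk, by simpa using hm 0 le_rfl, fun i hi hij => ?_⟩
  rw [show k + i - 1 = k + (i - 1) by omega]
  exact hrun _ (by omega)

lemma not_mem_W1 {ρ : ℕ → Fin 2} {b : ℕ} (hinit : ∀ m ≤ b, ρ m = 0)
    (hgaps : ∀ k, ∃ z ∈ Set.Icc k (k + b), ρ z = 0) : ρ ∉ W1 := by
  rintro ⟨-, j, k, hj, -, hρj, hrun⟩
  have hbj : b + 1 ≤ j := by
    by_contra! h
    simp [hinit (j - 1) (by omega)] at hρj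
  obtain ⟨z, ⟨hkz, hzk⟩, hz⟩ := hgaps k
  have hz1 := hrun (z - k + 1) (by omega) (by omega)
  rw [show k + (z - k + 1) - 1 = z by omega, hz] at hz1
  exact absurd hz1 (by decide)

lemma moveCountingWinning_replicate :
    MoveCountingWinning E2 0 W1 (fun _ n => List.replicate n 1) := by
  refine ⟨fun v n hn => ⟨by simp; omega, isChain_E2 _⟩, fun ρ hρ hcons => ?_⟩
  refine mem_W1_of_forall_exists_run hρ.1 fun n => ?_
  obtain ⟨c, hc, hblock⟩ := hcons.exists_block n
  exact ⟨c, hc, fun t ht => (hblock t (by simp; omega)).trans (List.getElem_replicate _)⟩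

lemma not_winningStrategy_of_boundedBy {b : ℕ} {f : List (Fin 2) → List (Fin 2)}
    (hf : WinningStrategy E2 0 W1 f) (hb : BoundedBy E2 0 b f) : False := by
  have hinit : List.replicate (b + 1) (0 : Fin 2) ≠ [] := List.cons_ne_nil _ _
  have hu : [(0 : Fin 2)] ≠ [] := List.cons_ne_nil _ _
  obtain ⟨ρ, hcons, hρ⟩ := exists_consGen_fixedReplyPos f hinit hu
  have hlen := lt_length_fixedReplyPos f hinit hu
  have hlast := getLast?_fixedReplyPos f (init := List.replicate (b + 1) 0) (u := [0]) (a := 0)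
    (by simp [List.getLast?_replicate]) rfl
  have hsucc := length_fixedReplyPos_succ f (List.replicate (b + 1) 0) [0]
  have hpos : ∀ n, IsPos E2 0 (fixedReplyPos f (List.replicate (b + 1) 0) [0] n) :=
    fun n => ⟨head?_fixedReplyPos f rfl n, isChain_E2 _⟩
  set p := fixedReplyPos f (List.replicate (b + 1) 0) [0]
  have hρ0 : ∀ m ≤ b, ρ m = 0 := fun m hm => by
    have := getElem_eq_of_pref_eq (hρ 0) (m := m) (by simp [p, fixedReplyPos]; omega)
    simpa [p, fixedReplyPos] using this.symm
  have hgap : ∀ i, (p (i + 1)).length - 1 ≤ (p i).length - 1 + b + 1 := fun i => by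
    have := hb _ (hpos i)
    have := hsucc i
    simp only [List.length_singleton] at this
    omega
  refine not_mem_W1 hρ0 (fun k => ?_) (hf.2 ρ ⟨hρ0 0 b.zero_le, fun _ => trivial⟩ hcons)
  obtain ⟨i, hi⟩ := exists_mem_Icc_of_gaps_le (fun i => Nat.le_sub_one_of_lt (hlen i)) hgap
    (m := k) (by simp [p, fixedReplyPos])
  exact ⟨_, hi, apply_length_sub_one_eq_of_pref_eq (hρ i) (hlast i)⟩

/-- In the game `(G_{0,1}, 0, W1)`, Player 0 has a move-counting winning strategy, but
has no `b`-bounded winning strategy for any `b ≥ 1`. -/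
theorem stmt1 :
    (∃ h : Fin 2 → ℕ → List (Fin 2), MoveCountingWinning E2 0 W1 h) ∧
    ∀ b : ℕ, 1 ≤ b →
      ¬ ∃ f : List (Fin 2) → List (Fin 2), WinningStrategy E2 0 W1 f ∧ BoundedBy E2 0 b f :=
  ⟨⟨_, moveCountingWinning_replicate⟩,
    fun _ _ ⟨_, hf, hb⟩ => not_winningStrategy_of_boundedBy hf hb⟩
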